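/- arXiv:2112.08042 — 3 statements merged into one kernel-verified Lean document; each statement's English description precedes it below -/
import Mathlib

section
/- Let p ∈ (0,1), define f(t) = ∑_{n≥2} p(1−p)^{n−2}·f_n(t) for t ∈ [0,1], and let α = (−3p + √(p(p+8)))/(4(1−p)) be the unique fixed point of f in (0,1). Then the basin of attraction of α contains [0,1): for every x_0 ∈ [0,1), the sequence of iterates u_0 = x_0, u_{m+1} = f(u_m) converges to α. -/
open Real Filter Finset

noncomputable def cb (k : ℕ) : ℝ := ((2 * k).choose k : ℝ)

lemma cb_nonneg (k : ℕ) : 0 ≤ cb k := Nat.cast_nonneg _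

lemma cb_zero : cb 0 = 1 := by simp [cb]

lemma cb_rec (k : ℕ) : ((k : ℝ) + 1) * cb (k + 1) = 2 * (2 * k + 1) * cb k := by
  have h := Nat.succ_mul_centralBinom_succ k
  simp only [Nat.centralBinom] at h
  have := congrArg (fun n : ℕ => (n : ℝ)) h
  push_cast at this
  unfold cb
  push_cast
  linarith

lemma cb_le (k : ℕ) : cb k ≤ 4 ^ k := by
  unfold cb
  have h : (2 * k).choose k ≤ 2 ^ (2 * k) := by
    calc (2 * k).choose k ≤ ∑ i ∈ range (2 * k + 1), (2 * k).choose i :=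
      Finset.single_le_sum (fun i _ => Nat.zero_le _) (by simp [Finset.mem_range]; omega)
    _ = 2 ^ (2 * k) := Nat.sum_range_choose (2 * k)
  calc ((2 * k).choose k : ℝ) ≤ (2 : ℝ) ^ (2 * k) := by exact_mod_cast h
  _ = 4 ^ k := by rw [pow_mul]; norm_num

lemma cb_wsum (k : ℕ) :
    2 * (∑ j ∈ range (k + 1), (j : ℝ) * (cb j * cb (k - j))) =
      k * ∑ j ∈ range (k + 1), cb j * cb (k - j) := by
  have hrefl := Finset.sum_range_reflect (fun j => (j : ℝ) * (cb j * cb (k - j))) (k + 1)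
  have h1 : ∑ j ∈ range (k + 1), ((k + 1 - 1 - j : ℕ) : ℝ) * (cb (k + 1 - 1 - j) * cb (k - (k + 1 - 1 - j)))
      = ∑ j ∈ range (k + 1), ((k : ℝ) - j) * (cb (k - j) * cb j) := by
    apply Finset.sum_congr rfl
    intro j hj
    have hjk : j ≤ k := by simpa [Nat.lt_succ_iff] using hj
    have e1 : k + 1 - 1 - j = k - j := by omega
    have e2 : k - (k - j) = j := by omega
    rw [e1, e2, Nat.cast_sub hjk]
  rw [h1] at hrefl
  have := hrefl
  -- 2 * Σ j f = Σ j f + Σ (k-j) f' = Σ k * f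
  have h2 : ∑ j ∈ range (k + 1), (j : ℝ) * (cb j * cb (k - j))
        + ∑ j ∈ range (k + 1), ((k : ℝ) - j) * (cb (k - j) * cb j)
      = ∑ j ∈ range (k + 1), (k : ℝ) * (cb j * cb (k - j)) := by
    rw [← Finset.sum_add_distrib]
    apply Finset.sum_congr rfl
    intro j hj
    ring
  rw [← this] at h2
  rw [← Finset.mul_sum] at h2
  linarith

lemma cb_conv (k : ℕ) : ∑ j ∈ range (k + 1), cb j * cb (k - j) = 4 ^ k := by
  induction k with
  | zero => simp [cb]
  | succ k ih =>
    set S := fun k : ℕ => ∑ j ∈ range (k + 1), cb j * cb (k - j) with hS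
    have hT2 : 2 * (∑ j ∈ range (k + 2), (j : ℝ) * (cb j * cb (k + 1 - j))) = (k + 1 : ℝ) * S (k + 1) := by
      have := cb_wsum (k + 1)
      push_cast at this ⊢
      convert this using 3 <;> norm_num
    have hT1 : (∑ j ∈ range (k + 2), (j : ℝ) * (cb j * cb (k + 1 - j)))
        = (2 * k + 2 : ℝ) * S k := by
      rw [Finset.sum_range_succ' (fun j => (j : ℝ) * (cb j * cb (k + 1 - j))) (k + 1)]
      have h0 : ((0 : ℕ) : ℝ) * (cb 0 * cb (k + 1 - 0)) = 0 := by simp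
      rw [h0, add_zero]
      have hcongr : ∑ j ∈ range (k + 1), ((j + 1 : ℕ) : ℝ) * (cb (j + 1) * cb (k + 1 - (j + 1)))
          = ∑ j ∈ range (k + 1), (2 * (2 * j + 1) * cb j) * cb (k - j) := by
        apply Finset.sum_congr rfl
        intro j hj
        have e : k + 1 - (j + 1) = k - j := by omega
        rw [e]
        push_cast
        have := cb_rec j
        linear_combination cb (k - j) * this
      rw [hcongr]
      have hsplit : ∑ j ∈ range (k + 1), (2 * (2 * j + 1) * cb j) * cb (k - j)
          = 4 * (∑ j ∈ range (k + 1), (j : ℝ) * (cb j * cb (k - j))) + 2 * S k := by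
        rw [hS]
        rw [Finset.mul_sum, Finset.mul_sum, ← Finset.sum_add_distrib]
        apply Finset.sum_congr rfl
        intro j hj
        ring
      rw [hsplit]
      have := cb_wsum k
      linarith
    have hk1 : (0 : ℝ) < (k : ℝ) + 1 := by positivity
    have hSk : S k = (4 : ℝ) ^ k := ih
    have : (k + 1 : ℝ) * S (k + 1) = (k + 1 : ℝ) * 4 ^ (k + 1) := by
      rw [← hT2, hT1, hSk]
      ring
    have := mul_left_cancel₀ (ne_of_gt hk1) this
    simpa [hS] using this

lemma summable_cb_mul {u : ℝ} (hu : 0 ≤ u) (h4 : 4 * u < 1) :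
    Summable (fun k => cb k * u ^ k) := by
  refine Summable.of_nonneg_of_le
    (fun k => mul_nonneg (cb_nonneg k) (pow_nonneg hu k)) (fun k => ?_)
    (summable_geometric_of_lt_one (by positivity) h4)
  rw [mul_pow]
  exact mul_le_mul_of_nonneg_right (cb_le k) (by positivity)

lemma hasSum_cb {u : ℝ} (hu : 0 ≤ u) (h4 : 4 * u < 1) :
    HasSum (fun k => cb k * u ^ k) (1 / Real.sqrt (1 - 4 * u)) := by
  have hsum := summable_cb_mul hu h4
  set h := ∑' k, cb k * u ^ k with hh
  have hnorm : Summable (fun k => ‖cb k * u ^ k‖) := by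
    apply hsum.congr
    intro k
    rw [Real.norm_eq_abs, abs_of_nonneg (mul_nonneg (cb_nonneg k) (pow_nonneg hu k))]
  have hsq : h * h = 1 / (1 - 4 * u) := by
    rw [hh, tsum_mul_tsum_eq_tsum_sum_range_of_summable_norm hnorm hnorm]
    have : ∀ n : ℕ, ∑ k ∈ range (n + 1), (cb k * u ^ k) * (cb (n - k) * u ^ (n - k))
        = (4 * u) ^ n := by
      intro n
      have : ∑ k ∈ range (n + 1), (cb k * u ^ k) * (cb (n - k) * u ^ (n - k))
          = (∑ k ∈ range (n + 1), cb k * cb (n - k)) * u ^ n := by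
        rw [Finset.sum_mul]
        apply Finset.sum_congr rfl
        intro k hk
        have hkn : k ≤ n := by simpa [Nat.lt_succ_iff] using hk
        have hu' : u ^ k * u ^ (n - k) = u ^ n := by
          rw [← pow_add, Nat.add_sub_cancel' hkn]
        calc cb k * u ^ k * (cb (n - k) * u ^ (n - k))
            = cb k * cb (n - k) * (u ^ k * u ^ (n - k)) := by ring
          _ = cb k * cb (n - k) * u ^ n := by rw [hu']
      rw [this, cb_conv, mul_pow]
    rw [tsum_congr this, tsum_geometric_of_lt_one (by positivity) h4, one_div]
  have h0 : 0 < h := by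
    have h1le : (1 : ℝ) ≤ h := by
      have := hsum.hasSum
      have : cb 0 * u ^ 0 ≤ h := Summable.le_tsum hsum 0 (fun k _ => mul_nonneg (cb_nonneg k) (pow_nonneg hu k))
      simpa [cb_zero] using this
    linarith
  have h14 : 0 < 1 - 4 * u := by linarith
  have : h = 1 / Real.sqrt (1 - 4 * u) := by
    have : Real.sqrt (h * h) = Real.sqrt (1 / (1 - 4 * u)) := by rw [hsq]
    rw [Real.sqrt_mul_self h0.le] at this
    rw [this, one_div, one_div, Real.sqrt_inv]
  rw [← this]
  exact hsum.hasSum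

/-- `f n t = ∑_{k, 0 ≤ 2k ≤ n} C(n,2k)·C(2k,k)·((1−t)/2)^{2k}·t^{n−2k}` -/
noncomputable def f (n : ℕ) (t : ℝ) : ℝ :=
  ∑ k ∈ Finset.range (n / 2 + 1),
    (n.choose (2 * k) : ℝ) * ((2 * k).choose k : ℝ) * ((1 - t) / 2) ^ (2 * k) * t ^ (n - 2 * k)

lemma f_term_nonneg {t : ℝ} (ht0 : 0 ≤ t) (n k : ℕ) :
    0 ≤ (n.choose (2 * k) : ℝ) * ((2 * k).choose k : ℝ) * ((1 - t) / 2) ^ (2 * k) * t ^ (n - 2 * k) := by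
  have h1 : (0:ℝ) ≤ ((1 - t) / 2) ^ (2 * k) := by
    rw [pow_mul]
    positivity
  positivity

lemma f_nonneg {t : ℝ} (ht0 : 0 ≤ t) (n : ℕ) : 0 ≤ f n t :=
  Finset.sum_nonneg fun k _ => f_term_nonneg ht0 n k

lemma hasSum_sf {s t : ℝ} (hs0 : 0 ≤ s) (hs1 : s < 1) (ht0 : 0 ≤ t) (ht1 : t ≤ 1) :
    HasSum (fun n => s ^ n * f n t)
      (1 / Real.sqrt ((1 - s * t) ^ 2 - s ^ 2 * (1 - t) ^ 2)) := by
  set x : ℝ := (1 - t) / 2 with hx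
  have hx0 : 0 ≤ x := by rw [hx]; linarith
  have h2x : 2 * x = 1 - t := by rw [hx]; ring
  have hst : s * t < 1 := lt_of_le_of_lt (by nlinarith) hs1
  have h1st : 0 < 1 - s * t := by linarith
  -- the double-indexed family
  set F : ℕ × ℕ → ℝ := fun q =>
    if 2 * q.1 ≤ q.2 then
      (q.2.choose (2 * q.1) : ℝ) * cb q.1 * x ^ (2 * q.1) * t ^ (q.2 - 2 * q.1) * s ^ q.2
    else 0 with hF
  have hF0 : ∀ q, 0 ≤ F q := by
    intro q
    rw [hF]
    dsimp only
    split
    · have h1 : (0:ℝ) ≤ x ^ (2 * q.1) := by rw [pow_mul]; positivity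
      have := cb_nonneg q.1
      positivity
    · exact le_refl 0
  have hstne : (1 - s * t) ≠ 0 := ne_of_gt h1st
  set u : ℝ := (x * s) ^ 2 / (1 - s * t) ^ 2 with hu
  have hu0 : 0 ≤ u := by positivity
  have h4x : 4 * x ^ 2 = (1 - t) ^ 2 := by nlinarith [h2x]
  have h4u : 4 * u < 1 := by
    have hle : s * (1 - t) < 1 - s * t := by nlinarith
    have h0le : 0 ≤ s * (1 - t) := by nlinarith
    have key : (s * (1 - t)) ^ 2 < (1 - s * t) ^ 2 := by nlinarith
    have hnum : 4 * (x * s) ^ 2 < (1 - s * t) ^ 2 := by nlinarith [sq_nonneg s]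
    rw [hu, mul_div_assoc']
    rw [div_lt_one (by positivity)]
    linarith
  set c : ℕ → ℝ := fun k => cb k * (x * s) ^ (2 * k) * (1 / (1 - s * t) ^ (2 * k + 1)) with hc
  -- fiberwise sums
  have hfiber : ∀ k, HasSum (fun n => F (k, n)) (c k) := by
    intro k
    have hr : ‖s * t‖ < 1 := by
      rw [Real.norm_eq_abs, abs_of_nonneg (mul_nonneg hs0 ht0)]
      exact hst
    have h0 := hasSum_choose_mul_geometric_of_norm_lt_one (𝕜 := ℝ) (2 * k) hr
    have h1 := h0.mul_left (cb k * (x * s) ^ (2 * k))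
    have h2 : (fun m => cb k * (x * s) ^ (2 * k) * (((m + 2 * k).choose (2 * k) : ℝ) * (s * t) ^ m))
        = fun m => F (k, m + 2 * k) := by
      funext m
      rw [hF]
      dsimp only
      rw [if_pos (by omega)]
      have e1 : m + 2 * k - 2 * k = m := by omega
      rw [e1]
      rw [mul_pow, mul_pow, pow_add]
      ring
    rw [h2] at h1
    have h3 := (hasSum_nat_add_iff (f := fun n => F (k, n)) (2 * k)).mp h1
    have h4 : ∑ i ∈ range (2 * k), F (k, i) = 0 := by
      apply Finset.sum_eq_zero
      intro i hi
      rw [hF]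
      dsimp only
      rw [if_neg]
      simp only [Finset.mem_range] at hi
      omega
    rw [h4, add_zero] at h3
    exact h3
  -- sum of the fiber sums
  set D : ℝ := (1 - s * t) ^ 2 - s ^ 2 * (1 - t) ^ 2 with hD
  have hDeq : D = (1 - s * t) ^ 2 * (1 - 4 * u) := by
    rw [hD, hu]
    field_simp
    nlinarith [h4x]
  have hDpos : 0 < D := by
    rw [hDeq]
    have : 0 < 1 - 4 * u := by linarith
    positivity
  have hsqrtD : Real.sqrt D = (1 - s * t) * Real.sqrt (1 - 4 * u) := by
    rw [hDeq, Real.sqrt_mul (sq_nonneg _), Real.sqrt_sq h1st.le]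
  have hcS : HasSum c (1 / Real.sqrt D) := by
    have hcb := (hasSum_cb hu0 h4u).mul_left (1 / (1 - s * t))
    have hkey : (fun k => 1 / (1 - s * t) * (cb k * u ^ k)) = c := by
      funext k
      have hupow : u ^ k = (x * s) ^ (2 * k) / (1 - s * t) ^ (2 * k) := by
        rw [hu, div_pow, ← pow_mul, ← pow_mul]
      rw [hc]
      dsimp only
      rw [hupow, pow_succ]
      simp only [one_div, div_eq_mul_inv, mul_inv]
      ring
    rw [hkey] at hcb
    rw [hsqrtD]
    rw [show 1 / ((1 - s * t) * √(1 - 4 * u)) = 1 / (1 - s * t) * (1 / √(1 - 4 * u)) by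
      rw [one_div, mul_inv, one_div, one_div]]
    exact hcb
  -- summability of F
  have hFsummable : Summable F := by
    apply (summable_prod_of_nonneg hF0).mpr
    constructor
    · exact fun k => (hfiber k).summable
    · exact hcS.summable.congr (fun k => ((hfiber k).tsum_eq).symm)
  have hFS : HasSum F (1 / Real.sqrt D) := by
    have h1 : HasSum c (∑' q, F q) := hFsummable.hasSum.prod_fiberwise hfiber
    have h2 : (∑' q, F q) = 1 / Real.sqrt D := h1.unique hcS
    exact h2 ▸ hFsummable.hasSum
  -- swap coordinates
  have hswap : HasSum (F ∘ (Equiv.prodComm ℕ ℕ)) (1 / Real.sqrt D) :=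
    (Equiv.prodComm ℕ ℕ).hasSum_iff.mpr hFS
  -- row sums
  have hrow : ∀ n, HasSum (fun k => F (k, n)) (s ^ n * f n t) := by
    intro n
    have h1 : ∀ k ∉ Finset.range (n / 2 + 1), F (k, n) = 0 := by
      intro k hk
      simp only [Finset.mem_range] at hk
      rw [hF]
      dsimp only
      rw [if_neg (by omega)]
    have h2 : HasSum (fun k => F (k, n)) (∑ k ∈ Finset.range (n / 2 + 1), F (k, n)) :=
      hasSum_sum_of_ne_finset_zero h1
    have h3 : ∑ k ∈ Finset.range (n / 2 + 1), F (k, n) = s ^ n * f n t := by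
      rw [f, Finset.mul_sum]
      apply Finset.sum_congr rfl
      intro k hk
      simp only [Finset.mem_range] at hk
      rw [hF]
      dsimp only
      rw [if_pos (by omega)]
      unfold cb
      ring
    rw [h3] at h2
    exact h2
  exact hswap.prod_fiberwise hrow

/-- `fGW p t = ∑_{n≥2} p(1−p)^{n−2} f_n(t)`, the generating function for the
shifted geometric offspring distribution. -/
noncomputable def fGW (p t : ℝ) : ℝ := ∑' n : ℕ, p * (1 - p) ^ n * f (n + 2) t

/-- `Y p t` is the expression under the square root. -/
noncomputable def Y (p t : ℝ) : ℝ := p * (2 - p + 2 * t * (p - 1))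

/-- closed form of `fGW`. -/
noncomputable def gcl (p t : ℝ) : ℝ :=
  p / (1 - p) ^ 2 * ((Real.sqrt (Y p t))⁻¹ - ((1 - p) * t + 1))

lemma f_zero (t : ℝ) : f 0 t = 1 := by simp [f]

lemma f_one (t : ℝ) : f 1 t = t := by simp [f]

lemma fGW_eq {p t : ℝ} (hp0 : 0 < p) (hp1 : p < 1) (ht0 : 0 ≤ t) (ht1 : t ≤ 1) :
    fGW p t = gcl p t := by
  set s : ℝ := 1 - p with hs
  have hs0 : 0 ≤ s := by rw [hs]; linarith
  have hs1 : s < 1 := by rw [hs]; linarith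
  have hsne : s ≠ 0 := by rw [hs]; intro h; linarith [(by linarith : (1:ℝ) - p > 0)]
  have hsum := hasSum_sf hs0 hs1 ht0 ht1
  set S : ℝ := 1 / Real.sqrt ((1 - s * t) ^ 2 - s ^ 2 * (1 - t) ^ 2) with hS
  have h2 : HasSum (fun n => s ^ (n + 2) * f (n + 2) t) (S - (1 + s * t)) := by
    apply (hasSum_nat_add_iff (f := fun n => s ^ n * f n t) 2).mpr
    have hsum2 : ∑ i ∈ Finset.range 2, s ^ i * f i t = 1 + s * t := by
      rw [Finset.sum_range_succ, Finset.sum_range_one, f_zero, f_one]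
      ring
    rw [hsum2]
    rw [sub_add_cancel]
    exact hsum
  have h3 := h2.mul_left (p / s ^ 2)
  have h4 : (fun n => p / s ^ 2 * (s ^ (n + 2) * f (n + 2) t))
      = fun n => p * (1 - p) ^ n * f (n + 2) t := by
    funext n
    rw [pow_add, ← hs]
    field_simp
  rw [h4] at h3
  have h5 : fGW p t = p / s ^ 2 * (S - (1 + s * t)) := h3.tsum_eq
  rw [h5, gcl]
  have hD : (1 - s * t) ^ 2 - s ^ 2 * (1 - t) ^ 2 = Y p t := by
    rw [hs, Y]; ring
  rw [hS, hD, hs]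
  rw [one_div]
  ring

lemma Ypos {p t : ℝ} (hp0 : 0 < p) (hp1 : p < 1) (ht1 : t ≤ 1) : 0 < Y p t := by
  unfold Y
  have hX : 0 < 2 - p + 2 * t * (p - 1) := by
    nlinarith [mul_nonneg (by linarith : (0:ℝ) ≤ 1 - p) (by linarith : (0:ℝ) ≤ 1 - t)]
  exact mul_pos hp0 hX

/-- derivative of the closed form -/
noncomputable def gd (p t : ℝ) : ℝ :=
  p / (1 - p) * (p / (Y p t * Real.sqrt (Y p t)) - 1)

lemma hasDerivAt_gcl {p t : ℝ} (hp0 : 0 < p) (hp1 : p < 1) (hY : 0 < Y p t) :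
    HasDerivAt (gcl p) (gd p t) t := by
  have ha : HasDerivAt (fun t => Y p t) (2 * p * (p - 1)) t := by
    have h1 : HasDerivAt (fun t : ℝ => p * (2 - p) + 2 * p * (p - 1) * t) (2 * p * (p - 1)) t := by
      simpa using ((hasDerivAt_id t).const_mul (2 * p * (p - 1))).const_add (p * (2 - p))
    have : (fun t => Y p t) = fun t : ℝ => p * (2 - p) + 2 * p * (p - 1) * t := by
      funext v; unfold Y; ring
    rw [this]
    exact h1
  have hsq := ha.sqrt hY.ne'
  have hq0 : 0 < Real.sqrt (Y p t) := Real.sqrt_pos.mpr hY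
  have hinv := hsq.inv hq0.ne'
  have hlin : HasDerivAt (fun t : ℝ => (1 - p) * t + 1) (1 - p) t := by
    simpa using ((hasDerivAt_id t).const_mul (1 - p)).add_const 1
  have h := (hinv.sub hlin).const_mul (p / (1 - p) ^ 2)
  have hfun : gcl p = fun t => p / (1 - p) ^ 2 * ((Real.sqrt (Y p t))⁻¹ - ((1 - p) * t + 1)) := rfl
  rw [hfun]
  refine h.congr_deriv ?_
  symm
  have hq2 : Real.sqrt (Y p t) * Real.sqrt (Y p t) = Y p t := Real.mul_self_sqrt hY.le
  unfold gd
  have h1p : (1 : ℝ) - p ≠ 0 := by intro hc; nlinarith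
  field_simp
  linear_combination (1 - p) * p * hq2

lemma gd_strictMonoOn {p : ℝ} (hp0 : 0 < p) (hp1 : p < 1) :
    StrictMonoOn (gd p) (Set.Icc 0 1) := by
  intro a ha b hb hab
  have hYa := Ypos (t := a) hp0 hp1 ha.2
  have hYb := Ypos (t := b) hp0 hp1 hb.2
  have hYlt : Y p b < Y p a := by
    unfold Y
    have : p * (2 * b * (p - 1)) < p * (2 * a * (p - 1)) := by
      apply (mul_lt_mul_iff_right₀ hp0).mpr
      nlinarith
    nlinarith
  have hsq : Real.sqrt (Y p b) < Real.sqrt (Y p a) := Real.sqrt_lt_sqrt hYb.le hYlt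
  have hqb : 0 < Real.sqrt (Y p b) := Real.sqrt_pos.mpr hYb
  have hprod : Y p b * Real.sqrt (Y p b) < Y p a * Real.sqrt (Y p a) :=
    mul_lt_mul'' hYlt hsq hYb.le hqb.le
  have hpos : 0 < Y p b * Real.sqrt (Y p b) := mul_pos hYb hqb
  unfold gd
  apply (mul_lt_mul_iff_right₀ (div_pos hp0 (by linarith) : 0 < p / (1 - p))).mpr
  have := div_lt_div_of_pos_left hp0 hpos hprod
  linarith

lemma gcl_contOn {p : ℝ} (hp0 : 0 < p) (hp1 : p < 1) : ContinuousOn (gcl p) (Set.Icc 0 1) :=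
  fun t ht => ((hasDerivAt_gcl hp0 hp1 (Ypos hp0 hp1 ht.2)).continuousAt).continuousWithinAt

lemma gcl_strictConvexOn {p : ℝ} (hp0 : 0 < p) (hp1 : p < 1) :
    StrictConvexOn ℝ (Set.Icc 0 1) (gcl p) := by
  apply StrictMonoOn.strictConvexOn_of_deriv (convex_Icc 0 1) (gcl_contOn hp0 hp1)
  rw [interior_Icc]
  intro a ha b hb hab
  rw [(hasDerivAt_gcl hp0 hp1 (Ypos hp0 hp1 ha.2.le)).deriv,
    (hasDerivAt_gcl hp0 hp1 (Ypos hp0 hp1 hb.2.le)).deriv]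
  exact gd_strictMonoOn hp0 hp1 ⟨ha.1.le, ha.2.le⟩ ⟨hb.1.le, hb.2.le⟩ hab

lemma gcl_one {p : ℝ} (hp0 : 0 < p) (hp1 : p < 1) : gcl p 1 = 1 := by
  have hY1 : Y p 1 = p ^ 2 := by unfold Y; ring
  have h1p : (1 : ℝ) - p ≠ 0 := by intro hc; nlinarith
  rw [gcl, hY1, Real.sqrt_sq hp0.le]
  field_simp
  ring

lemma gd_zero_gt {p : ℝ} (hp0 : 0 < p) (hp1 : p < 1) : -1 < gd p 0 := by
  have hY0 : Y p 0 = p * (2 - p) := by unfold Y; ring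
  have hY0pos : 0 < Y p 0 := Ypos hp0 hp1 (by norm_num)
  have hq0 : 0 < Real.sqrt (Y p 0) := Real.sqrt_pos.mpr hY0pos
  have hq2 : Real.sqrt (Y p 0) * Real.sqrt (Y p 0) = Y p 0 := Real.mul_self_sqrt hY0pos.le
  set q := Real.sqrt (Y p 0) with hq
  set R := p / (Y p 0 * q) with hR
  have hden : 0 < Y p 0 * q := mul_pos hY0pos hq0
  have hRpos : 0 < R := div_pos hp0 hden
  have hkey : 2 * p - 1 < p * R := by
    rcases le_or_gt p (1/2) with hhalf | hhalf
    · nlinarith [mul_pos hp0 hRpos]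
    · -- p > 1/2
      have hc2 : 0 < 2 * p ^ 2 - 9 * p + 10 := by nlinarith
      have hcu : 0 < 4 * p ^ 3 - 20 * p ^ 2 + 29 * p - 8 := by
        nlinarith [mul_pos (show (0:ℝ) < 2 * p - 1 by linarith) hc2]
      have hsq1 : 0 < (p - 1) ^ 2 := by nlinarith
      have hfull : 0 < p ^ 3 * ((p - 1) ^ 2 * (4 * p ^ 3 - 20 * p ^ 2 + 29 * p - 8)) :=
        mul_pos (pow_pos hp0 3) (mul_pos hsq1 hcu)
      have hkey2 : (2 * p - 1) ^ 2 * (p * (2 - p)) ^ 3 < (p ^ 2) ^ 2 := by nlinarith [hfull]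
      -- deduce (2p-1) * (Y0 * q) < p^2
      have hY03 : (Y p 0 * q) ^ 2 = (p * (2 - p)) ^ 3 := by
        rw [mul_pow]
        rw [show q ^ 2 = q * q by ring, hq2, hY0]
        ring
      have hlt : (2 * p - 1) * (Y p 0 * q) < p ^ 2 := by
        have hsqlt : ((2 * p - 1) * (Y p 0 * q)) ^ 2 < (p ^ 2) ^ 2 := by
          rw [mul_pow, hY03]
          exact hkey2
        have h2p1 : 0 < 2 * p - 1 := by linarith
        have hnn : 0 ≤ (2 * p - 1) * (Y p 0 * q) := by positivity
        nlinarith [hsqlt, hnn]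
      rw [hR]
      rw [show p * (p / (Y p 0 * q)) = p ^ 2 / (Y p 0 * q) by ring]
      rw [lt_div_iff₀ hden]
      linarith
  have heq : gd p 0 = (p * R - (2 * p - 1)) / (1 - p) - 1 := by
    have h1p : (1:ℝ) - p ≠ 0 := by intro hc; nlinarith
    unfold gd
    rw [← hq, ← hR]
    field_simp [h1p, hY0pos.ne', hq0.ne']
    ring
  rw [heq]
  have : 0 < (p * R - (2 * p - 1)) / (1 - p) := div_pos (by linarith) (by linarith)
  linarith

section FixedPoint

variable {p : ℝ}

lemma sqrt_facts (hp0 : 0 < p) (hp1 : p < 1) :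
    Real.sqrt (p * (p + 8)) ^ 2 = p * (p + 8) ∧ 3 * p < Real.sqrt (p * (p + 8)) ∧
      Real.sqrt (p * (p + 8)) < 2 + p := by
  have hs2 : Real.sqrt (p * (p + 8)) ^ 2 = p * (p + 8) := Real.sq_sqrt (by positivity)
  have hs0 : 0 ≤ Real.sqrt (p * (p + 8)) := Real.sqrt_nonneg _
  refine ⟨hs2, ?_, ?_⟩
  · nlinarith [hs2, hs0]
  · nlinarith [hs2, hs0]

lemma alpha_pos (hp0 : 0 < p) (hp1 : p < 1) :
    0 < (-3 * p + Real.sqrt (p * (p + 8))) / (4 * (1 - p)) := by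
  obtain ⟨hs2, h3p, hlt⟩ := sqrt_facts hp0 hp1
  apply div_pos (by linarith) (by linarith)

lemma alpha_lt_half (hp0 : 0 < p) (hp1 : p < 1) :
    (-3 * p + Real.sqrt (p * (p + 8))) / (4 * (1 - p)) < 1 / 2 := by
  obtain ⟨hs2, h3p, hlt⟩ := sqrt_facts hp0 hp1
  rw [div_lt_iff₀ (by linarith : (0:ℝ) < 4 * (1 - p))]
  nlinarith

lemma gcl_alpha (hp0 : 0 < p) (hp1 : p < 1) :
    gcl p ((-3 * p + Real.sqrt (p * (p + 8))) / (4 * (1 - p)))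
      = (-3 * p + Real.sqrt (p * (p + 8))) / (4 * (1 - p)) := by
  obtain ⟨hs2, h3p, hlt⟩ := sqrt_facts hp0 hp1
  set s : ℝ := Real.sqrt (p * (p + 8)) with hsdef
  set a : ℝ := (-3 * p + s) / (4 * (1 - p)) with ha
  have h1p : (0:ℝ) < 1 - p := by linarith
  have hαq : a * (1 - p) = (-3 * p + s) / 4 := by
    rw [ha]; field_simp
  have he : 2 - p + 2 * a * (p - 1) = (4 + p - s) / 2 := by
    linear_combination (-2 : ℝ) * hαq
  have hYa : Y p a = ((s - p) / 2) ^ 2 := by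
    rw [Y, he]
    linear_combination (-(1:ℝ)/4) * hs2
  have hsp : 0 < (s - p) / 2 := by linarith
  have hsqrtYa : Real.sqrt (Y p a) = (s - p) / 2 := by
    rw [hYa, Real.sqrt_sq hsp.le]
  have hinv : ((s - p) / 2)⁻¹ = (s + p) / (4 * p) := by
    have hmul : (s + p) / (4 * p) * ((s - p) / 2) = 1 := by
      field_simp
      linear_combination hs2
    exact inv_eq_of_mul_eq_one_left hmul
  rw [gcl, hsqrtYa, hinv]
  rw [ha]
  field_simp
  ring
end FixedPoint

section Dynamics

variable {p : ℝ}

/-- On `(a, 1)` a strictly convex map with fixed points `a` and `1` is below the diagonal. -/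
lemma conv_lt_self {g : ℝ → ℝ} (hconv : StrictConvexOn ℝ (Set.Icc 0 1) g) {a x : ℝ}
    (ha0 : 0 ≤ a) (hga : g a = a) (hg1 : g 1 = 1) (hax : a < x) (hx1 : x < 1) :
    g x < x := by
  have ha1 : a < 1 := lt_trans hax hx1
  have h1a : (0:ℝ) < 1 - a := by linarith
  set w1 : ℝ := (1 - x) / (1 - a) with hw1
  set w2 : ℝ := (x - a) / (1 - a) with hw2
  have hw1pos : 0 < w1 := div_pos (by linarith) h1a
  have hw2pos : 0 < w2 := div_pos (by linarith) h1a
  have hsum : w1 + w2 = 1 := by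
    rw [hw1, hw2, ← add_div, div_eq_one_iff_eq h1a.ne']
    ring
  have hcomb : w1 • a + w2 • (1:ℝ) = x := by
    rw [smul_eq_mul, smul_eq_mul, hw1, hw2, div_mul_eq_mul_div, div_mul_eq_mul_div,
      ← add_div, div_eq_iff h1a.ne']
    ring
  have h := hconv.2 (Set.mem_Icc.mpr ⟨ha0, ha1.le⟩) (Set.mem_Icc.mpr ⟨by norm_num, le_refl 1⟩)
    (by intro hc; rw [hc] at ha1; exact absurd ha1 (lt_irrefl 1) : a ≠ 1) hw1pos hw2pos hsum
  rw [hcomb, hga, hg1] at h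
  calc g x < w1 • a + w2 • (1:ℝ) := h
  _ = x := hcomb

/-- On `[0, a)` such a map is above the diagonal. -/
lemma conv_gt_self {g : ℝ → ℝ} (hconv : StrictConvexOn ℝ (Set.Icc 0 1) g) {a x : ℝ}
    (ha1 : a < 1) (hga : g a = a) (hg1 : g 1 = 1) (hx0 : 0 ≤ x) (hax : x < a) :
    x < g x := by
  have hx1 : x < 1 := lt_trans hax ha1
  have h1x : (0:ℝ) < 1 - x := by linarith
  set w1 : ℝ := (1 - a) / (1 - x) with hw1
  set w2 : ℝ := (a - x) / (1 - x) with hw2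
  have hw1pos : 0 < w1 := div_pos (by linarith) h1x
  have hw2pos : 0 < w2 := div_pos (by linarith) h1x
  have hsum : w1 + w2 = 1 := by
    rw [hw1, hw2, ← add_div, div_eq_one_iff_eq h1x.ne']
    ring
  have hcomb : w1 • x + w2 • (1:ℝ) = a := by
    rw [smul_eq_mul, smul_eq_mul, hw1, hw2, div_mul_eq_mul_div, div_mul_eq_mul_div,
      ← add_div, div_eq_iff h1x.ne']
    ring
  have h := hconv.2 (Set.mem_Icc.mpr ⟨hx0, hx1.le⟩) (Set.mem_Icc.mpr ⟨by norm_num, le_refl 1⟩)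
    (by intro hc; rw [hc] at hx1; exact absurd hx1 (lt_irrefl 1) : x ≠ 1) hw1pos hw2pos hsum
  rw [hcomb, hga, hg1] at h
  have h' : w1 * x + w2 * 1 < w1 * g x + w2 * 1 := by
    calc w1 * x + w2 * 1 = w1 • x + w2 • (1:ℝ) := by simp [smul_eq_mul]
    _ = a := hcomb
    _ < w1 • g x + w2 • (1:ℝ) := h
    _ = w1 * g x + w2 * 1 := by simp [smul_eq_mul]
  have := lt_of_mul_lt_mul_left (by linarith : w1 * x < w1 * g x) hw1pos.le
  exact this

/-- strict decrease of the distance to the interior fixed point. -/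
lemma dist_decrease (hp0 : 0 < p) (hp1 : p < 1) {a x : ℝ}
    (ha0 : 0 < a) (ha1 : a < 1) (hga : gcl p a = a)
    (hx0 : 0 ≤ x) (hx1 : x < 1) (hne : x ≠ a) :
    |gcl p x - a| < |x - a| := by
  have hconv := gcl_strictConvexOn hp0 hp1
  have hg1 := gcl_one hp0 hp1
  have hgd0 := gd_zero_gt hp0 hp1
  have hgdmono := gd_strictMonoOn hp0 hp1
  rcases lt_or_gt_of_ne hne with hlt | hgt
  · -- x < a
    obtain ⟨ξ, hξ, hslope⟩ := exists_hasDerivAt_eq_slope (gcl p) (gd p) hlt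
      ((gcl_contOn hp0 hp1).mono (Set.Icc_subset_Icc hx0 ha1.le))
      (fun y hy => hasDerivAt_gcl hp0 hp1 (Ypos hp0 hp1 (by linarith [hy.2])))
    have hξ01 : ξ ∈ Set.Icc (0:ℝ) 1 := ⟨le_trans hx0 hξ.1.le, by linarith [hξ.2]⟩
    have hgdξ : gd p 0 < gd p ξ := by
      apply hgdmono (Set.mem_Icc.mpr ⟨le_refl 0, by norm_num⟩) hξ01
      exact lt_of_le_of_lt hx0 hξ.1
    have hslope' : -1 < (gcl p a - gcl p x) / (a - x) := by
      rw [← hslope]; linarith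
    have hax : 0 < a - x := by linarith
    have hup : -(a - x) < gcl p a - gcl p x := by
      have := (lt_div_iff₀ hax).mp hslope'
      linarith
    have hlow : x < gcl p x := conv_gt_self hconv ha1 hga hg1 hx0 hlt
    rw [hga] at hup
    rw [abs_of_neg (by linarith : x - a < 0), abs_lt]
    constructor <;> [linarith; linarith]
  · -- a < x
    obtain ⟨ξ, hξ, hslope⟩ := exists_hasDerivAt_eq_slope (gcl p) (gd p) hgt
      ((gcl_contOn hp0 hp1).mono (Set.Icc_subset_Icc ha0.le hx1.le))
      (fun y hy => hasDerivAt_gcl hp0 hp1 (Ypos hp0 hp1 (by linarith [hy.2])))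
    have hξ01 : ξ ∈ Set.Icc (0:ℝ) 1 := ⟨by linarith [hξ.1], by linarith [hξ.2]⟩
    have hgdξ : gd p 0 < gd p ξ := by
      apply hgdmono (Set.mem_Icc.mpr ⟨le_refl 0, by norm_num⟩) hξ01
      linarith [hξ.1]
    have hslope' : -1 < (gcl p x - gcl p a) / (x - a) := by
      rw [← hslope]; linarith
    have hax : 0 < x - a := by linarith
    have hup : -(x - a) < gcl p x - gcl p a := by
      have := (lt_div_iff₀ hax).mp hslope'
      linarith
    have hlow : gcl p x < x := conv_lt_self hconv ha0.le hga hg1 hgt hx1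
    rw [hga] at hup
    rw [abs_of_pos (by linarith : 0 < x - a), abs_lt]
    constructor <;> [linarith; linarith]

end Dynamics

lemma fGW_nonneg {p t : ℝ} (hp0 : 0 < p) (hp1 : p < 1) (ht0 : 0 ≤ t) : 0 ≤ fGW p t := by
  apply tsum_nonneg
  intro n
  exact mul_nonneg (mul_nonneg hp0.le (pow_nonneg (by linarith) n)) (f_nonneg ht0 (n + 2))

theorem stmt_14 (p : ℝ) (hp : p ∈ Set.Ioo (0 : ℝ) 1) :
    ∀ x₀ ∈ Set.Ico (0 : ℝ) 1,
      Filter.Tendsto (fun m => (fGW p)^[m] x₀) Filter.atTop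
        (nhds ((-3 * p + Real.sqrt (p * (p + 8))) / (4 * (1 - p)))) := by
  obtain ⟨hp0, hp1⟩ := hp
  intro x₀ hx₀
  obtain ⟨hx00, hx01⟩ := hx₀
  set a : ℝ := (-3 * p + Real.sqrt (p * (p + 8))) / (4 * (1 - p)) with ha
  have ha0 : 0 < a := alpha_pos hp0 hp1
  have hahalf : a < 1 / 2 := alpha_lt_half hp0 hp1
  have ha1 : a < 1 := by linarith
  have hga : gcl p a = a := gcl_alpha hp0 hp1
  set M : ℝ := max x₀ (2 * a) with hM
  have hM1 : M < 1 := max_lt hx01 (by linarith)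
  have hM0 : x₀ ≤ M := le_max_left _ _
  have haM : a ≤ M := le_trans (by linarith) (le_max_right _ _)
  set u : ℕ → ℝ := fun m => (fGW p)^[m] x₀ with hu
  have hu0 : u 0 = x₀ := rfl
  have husucc : ∀ m, u (m + 1) = fGW p (u m) := fun m =>
    Function.iterate_succ_apply' (fGW p) m x₀
  have hinv : ∀ m, (0 ≤ u m ∧ u m ≤ M) ∧ |u m - a| ≤ |x₀ - a| := by
    intro m
    induction m with
    | zero => rw [hu0]; exact ⟨⟨hx00, hM0⟩, le_refl _⟩
    | succ m ih =>
      obtain ⟨⟨h0, hMle⟩, hd⟩ := ih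
      have hum1 : u m ≤ 1 := le_trans hMle hM1.le
      have heq : u (m + 1) = gcl p (u m) := by rw [husucc m, fGW_eq hp0 hp1 h0 hum1]
      have h0' : 0 ≤ u (m + 1) := by rw [husucc m]; exact fGW_nonneg hp0 hp1 h0
      by_cases hc : u m = a
      · have hfix : u (m + 1) = a := by rw [heq, hc, hga]
        refine ⟨⟨h0', by rw [hfix]; exact haM⟩, ?_⟩
        rw [hfix]
        simpa using abs_nonneg (x₀ - a)
      · have hdec : |gcl p (u m) - a| < |u m - a| :=
          dist_decrease hp0 hp1 ha0 ha1 hga h0 (lt_of_le_of_lt hMle hM1) hc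
        have hd' : |u (m + 1) - a| ≤ |x₀ - a| := by
          rw [heq]; exact le_trans hdec.le hd
        refine ⟨⟨h0', ?_⟩, hd'⟩
        have h1 : u (m + 1) - a ≤ |x₀ - a| := le_trans (le_abs_self _) hd'
        rcases le_or_gt a x₀ with hcase | hcase
        · have habs : |x₀ - a| = x₀ - a := abs_of_nonneg (by linarith)
          rw [habs] at h1
          linarith [hM0]
        · have habs : |x₀ - a| = -(x₀ - a) := abs_of_neg (by linarith)
          rw [habs] at h1
          have h2 : u (m + 1) ≤ 2 * a := by linarith
          exact le_trans h2 (le_max_right _ _)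
  set d : ℕ → ℝ := fun m => |u m - a| with hd
  have hd0 : ∀ m, 0 ≤ d m := fun m => abs_nonneg _
  have hdstep : ∀ m, d (m + 1) ≤ d m := by
    intro m
    obtain ⟨⟨h0, hMle⟩, _⟩ := hinv m
    have heq : u (m + 1) = gcl p (u m) := by
      rw [husucc m, fGW_eq hp0 hp1 h0 (le_trans hMle hM1.le)]
    by_cases hc : u m = a
    · show |u (m + 1) - a| ≤ |u m - a|
      rw [heq, hc, hga]
    · show |u (m + 1) - a| ≤ |u m - a|
      rw [heq]
      exact (dist_decrease hp0 hp1 ha0 ha1 hga h0 (lt_of_le_of_lt hMle hM1) hc).le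
  have hanti : Antitone d := antitone_nat_of_succ_le hdstep
  have hbdd : BddBelow (Set.range d) := ⟨0, fun y hy => by
    obtain ⟨m, rfl⟩ := hy; exact hd0 m⟩
  set L : ℝ := ⨅ m, d m with hL
  have htend : Filter.Tendsto d Filter.atTop (nhds L) := tendsto_atTop_ciInf hanti hbdd
  have hLle : ∀ m, L ≤ d m := fun m => ciInf_le hbdd m
  have hL0 : 0 ≤ L := le_ciInf hd0
  have hLzero : L = 0 := by
    by_contra hne
    have hLpos : 0 < L := lt_of_le_of_ne hL0 (Ne.symm hne)
    set K : Set ℝ := Set.Icc 0 M ∩ {x | L ≤ |x - a|} with hK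
    have hKcomp : IsCompact K := (isCompact_Icc).inter_right
      (isClosed_le continuous_const ((continuous_id.sub continuous_const).abs))
    have hKne : K.Nonempty := ⟨u 0, ⟨(hinv 0).1.1, (hinv 0).1.2⟩, hLle 0⟩
    set φ : ℝ → ℝ := fun x => |x - a| - |gcl p x - a| with hφ
    have hφcont : ContinuousOn φ K := by
      apply ContinuousOn.sub
      · exact ((continuous_id.sub continuous_const).abs).continuousOn
      · apply ContinuousOn.abs
        apply ContinuousOn.sub _ continuousOn_const
        apply (gcl_contOn hp0 hp1).mono
        intro x hx
        exact ⟨hx.1.1, le_trans hx.1.2 hM1.le⟩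
    obtain ⟨z, hzK, hzmin⟩ := hKcomp.exists_isMinOn hKne hφcont
    have hεpos : 0 < φ z := by
      have hz0 : 0 ≤ z := hzK.1.1
      have hz1 : z < 1 := lt_of_le_of_lt hzK.1.2 hM1
      have hzne : z ≠ a := by
        intro hc
        have := hzK.2
        rw [hc] at this
        simp at this
        linarith
      have := dist_decrease hp0 hp1 ha0 ha1 hga hz0 hz1 hzne
      show 0 < |z - a| - |gcl p z - a|
      linarith
    have hstep : ∀ m, d (m + 1) ≤ d m - φ z := by
      intro m
      obtain ⟨⟨h0, hMle⟩, _⟩ := hinv m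
      have hmem : u m ∈ K := ⟨⟨h0, hMle⟩, hLle m⟩
      have hφm : φ z ≤ φ (u m) := hzmin hmem
      have heq : u (m + 1) = gcl p (u m) := by
        rw [husucc m, fGW_eq hp0 hp1 h0 (le_trans hMle hM1.le)]
      have hval : φ (u m) = d m - d (m + 1) := by
        show |u m - a| - |gcl p (u m) - a| = |u m - a| - |u (m + 1) - a|
        rw [heq]
      rw [hval] at hφm
      linarith
    have hlin : ∀ m : ℕ, d m ≤ d 0 - m * φ z := by
      intro m
      induction m with
      | zero => simp
      | succ m ih =>
        have := hstep m
        push_cast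
        push_cast at ih
        linarith
    obtain ⟨m, hm⟩ := exists_nat_gt (d 0 / φ z)
    have hlt : d 0 < m * φ z := by rwa [div_lt_iff₀ hεpos] at hm
    have h1 := hlin m
    have h2 := hd0 m
    linarith
  have htend0 : Filter.Tendsto (fun m => dist (u m) a) Filter.atTop (nhds 0) := by
    have : (fun m => dist (u m) a) = d := by
      funext m
      rw [Real.dist_eq]
    rw [this, ← hLzero]
    exact htend
  exact tendsto_iff_dist_tendsto_zero.mpr htend0
end

section
/- For every integer n ≥ 2 and every real t, the identity ((t−1)/n)·f_n′(t) = f_n(t) − f_{n−1}(t) holds, where f_1(t) = t. -/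
open Real Filter Finset

lemma f_hasDeriv (n : ℕ) (t : ℝ) : HasDerivAt (f n)
    (∑ k ∈ Finset.range (n / 2 + 1),
      (n.choose (2 * k) : ℝ) * ((2 * k).choose k : ℝ) *
        (((2 * k : ℕ) : ℝ) * ((1 - t) / 2) ^ (2 * k - 1) * (-(1 / 2)) * t ^ (n - 2 * k)
          + ((1 - t) / 2) ^ (2 * k) * (((n - 2 * k : ℕ) : ℝ) * t ^ (n - 2 * k - 1)))) t := by
  exact HasDerivAt.fun_sum (fun k _ => by
      have h1 : HasDerivAt (fun t : ℝ => (1 - t) / 2) (-(1/2)) t := by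
        have := ((hasDerivAt_id t).const_sub 1).div_const 2
        exact this.congr_deriv (by norm_num)
      have h4 := (h1.pow (2 * k)).mul (hasDerivAt_pow (n - 2 * k) t)
      have h5 := h4.const_mul ((n.choose (2 * k) : ℝ) * ((2 * k).choose k : ℝ))
      simp only [Pi.mul_apply, Pi.pow_apply] at h5
      exact h5.congr_of_eventuallyEq (Filter.Eventually.of_forall fun y => by ring))

lemma choose_key (n k : ℕ) (hn : 1 ≤ n) : n * (n - 1).choose k = n.choose k * (n - k) := by
  obtain ⟨m, rfl⟩ := Nat.exists_eq_add_of_le hn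
  simp only [Nat.add_sub_cancel_left]
  rw [Nat.add_comm 1 m, ← Nat.choose_succ_right_eq, ← Nat.add_one_mul_choose_eq]

theorem stmt_16 (n : ℕ) (hn : 2 ≤ n) (t : ℝ) :
    (t - 1) / n * deriv (f n) t = f n t - f (n - 1) t := by
  have hn0 : (n : ℝ) ≠ 0 := Nat.cast_ne_zero.mpr (by omega)
  rw [(f_hasDeriv n t).deriv]
  have hfn1 : f (n - 1) t = ∑ k ∈ Finset.range (n / 2 + 1),
      ((n - 1).choose (2 * k) : ℝ) * ((2 * k).choose k : ℝ) * ((1 - t) / 2) ^ (2 * k)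
        * t ^ (n - 1 - 2 * k) := by
    unfold f
    apply Finset.sum_subset
    · exact Finset.range_subset_range.mpr (by gcongr <;> omega)
    · intro k hk hk'
      simp only [Finset.mem_range] at hk hk'
      have : n - 1 < 2 * k := by omega
      rw [Nat.choose_eq_zero_of_lt this]
      simp
  rw [hfn1, f, Finset.mul_sum, ← Finset.sum_sub_distrib]
  apply Finset.sum_congr rfl
  intro k hk
  simp only [Finset.mem_range] at hk
  have h2k : 2 * k ≤ n := by omega
  obtain ⟨m, rfl⟩ := Nat.exists_eq_add_of_le h2k
  have hkeyn : m * ((2 * k + m).choose (2 * k)) =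
      (2 * k + m) * ((2 * k + m - 1).choose (2 * k)) := by
    rw [choose_key (2 * k + m) (2 * k) (by omega),
      show 2 * k + m - 2 * k = m from by omega, Nat.mul_comm]
  have hkey : ((m : ℝ)) * ((2 * k + m).choose (2 * k)) =
      (2 * k + m : ℕ) * ((2 * k + m - 1).choose (2 * k)) := by exact_mod_cast hkeyn
  have e1 : 2 * k + m - 2 * k = m := by omega
  rw [e1]
  rcases m with _ | j
  · -- m = 0, so 2k = n, k ≥ 1
    have hk1 : 1 ≤ k := by omega
    have e3 : ((2 * k + 0 - 1).choose (2 * k) : ℝ) = 0 := by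
      rw [Nat.choose_eq_zero_of_lt (by omega)]; norm_num
    obtain ⟨i, rfl⟩ := Nat.exists_eq_add_of_le hk1
    have e4 : 2 * (1 + i) - 1 = 2 * i + 1 := by omega
    rw [e3, e4]
    simp only [Nat.add_zero, Nat.sub_self, pow_zero]
    have e6 : 2 * (1 + i) = 2 * i + 2 := by omega
    rw [e6]
    rw [e6] at hn0
    push_cast at hn0 ⊢
    field_simp
    ring
  · -- m = j + 1
    have e2 : 2 * k + (j + 1) - 1 - 2 * k = j := by omega
    rw [e2, Nat.add_sub_cancel]
    rcases k with _ | i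
    · norm_num
      field_simp
      push_cast
      ring
    · have e4 : 2 * (i + 1) - 1 = 2 * i + 1 := by omega
      rw [e4, div_mul_eq_mul_div, div_eq_iff hn0]
      push_cast at hkey ⊢
      linear_combination (-(((2 * (i + 1)).choose (i + 1) : ℝ)) * ((1 - t) / 2) ^ (2 * (i + 1)) * t ^ j) * hkey
end

section
/- For every integer n ≥ 2 and every real t, the identity f_n(t) − t = (t−1)·∑_{k=2}^{n} (1/k)·f_k′(t) holds. -/
open Real Filter Finset

lemma hasDerivAt_f (n : ℕ) (t : ℝ) :
    HasDerivAt (f n)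
      (∑ k ∈ Finset.range (n / 2 + 1),
        ((n.choose (2 * k) : ℝ) * ((2 * k).choose k : ℝ) *
            ((2 * k : ℕ) * ((1 - t) / 2) ^ (2 * k - 1) * (-1 / 2)) * t ^ (n - 2 * k)
          + (n.choose (2 * k) : ℝ) * ((2 * k).choose k : ℝ) * ((1 - t) / 2) ^ (2 * k) *
            ((n - 2 * k : ℕ) * t ^ (n - 2 * k - 1)))) t := by
  apply HasDerivAt.fun_sum
  intro k _
  have hu : HasDerivAt (fun x : ℝ => (1 - x) / 2) (-1 / 2) t := by
    simpa using (((hasDerivAt_id t).const_sub 1).div_const 2)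
  have h1 := (hu.pow (2 * k)).const_mul ((n.choose (2 * k) : ℝ) * ((2 * k).choose k : ℝ))
  exact h1.mul (hasDerivAt_pow (n - 2 * k) t)

lemma nat_id (n j : ℕ) : (n - j) * n.choose j = n * (n - 1).choose j := by
  rcases n with _ | m
  · simp
  · calc (m + 1 - j) * (m + 1).choose j = (m + 1).choose j * (m + 1 - j) := by ring
    _ = (m + 1).choose (j + 1) * (j + 1) := (Nat.choose_succ_right_eq _ _).symm
    _ = (m + 1) * m.choose j := (Nat.add_one_mul_choose_eq m j).symm
    _ = (m + 1) * (m + 1 - 1).choose j := by simp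

lemma term_id (c : ℝ) (k m : ℕ) (h : 1 ≤ 2 * k + m) (t : ℝ) :
    (t - 1) * (c * ((2 * k : ℕ) * ((1 - t) / 2) ^ (2 * k - 1) * (-1 / 2)) * t ^ m
      + c * ((1 - t) / 2) ^ (2 * k) * (((m : ℕ) : ℝ) * t ^ (m - 1)))
    = ((2 * k + m : ℕ) : ℝ) * c * ((1 - t) / 2) ^ (2 * k) * t ^ m
      - (m : ℝ) * c * ((1 - t) / 2) ^ (2 * k) * t ^ (m - 1) := by
  rcases k with _ | j
  · rcases m with _ | l
    · omega
    · push_cast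
      simp only [Nat.mul_zero, Nat.zero_sub, pow_zero, pow_succ, Nat.succ_sub_one]
      ring
  · have h2 : 2 * (j + 1) = (2 * j + 1) + 1 := by ring
    rcases m with _ | l
    · push_cast
      simp only [h2, pow_succ, Nat.succ_sub_one, Nat.zero_sub, pow_zero, Nat.cast_zero]
      ring
    · push_cast
      simp only [h2, pow_succ, Nat.succ_sub_one]
      ring

lemma key (n : ℕ) (hn : 1 ≤ n) (t : ℝ) :
    (t - 1) * deriv (f n) t = (n : ℝ) * (f n t - f (n - 1) t) := by
  rw [(hasDerivAt_f n t).deriv, Finset.mul_sum]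
  have hstep : ∀ k ∈ Finset.range (n / 2 + 1),
      (t - 1) * ((n.choose (2*k) : ℝ) * ((2*k).choose k : ℝ) *
            ((2*k : ℕ) * ((1-t)/2)^(2*k-1) * (-1/2)) * t^(n-2*k)
          + (n.choose (2*k) : ℝ) * ((2*k).choose k : ℝ) * ((1-t)/2)^(2*k) *
            ((n-2*k : ℕ) * t^(n-2*k-1)))
      = (n : ℝ) * ((n.choose (2*k) : ℝ) * ((2*k).choose k : ℝ) * ((1-t)/2)^(2*k) * t^(n-2*k))
        - (n : ℝ) * (((n-1).choose (2*k) : ℝ) * ((2*k).choose k : ℝ) * ((1-t)/2)^(2*k) * t^(n-1-2*k)) := by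
    intro k hk
    have h2k : 2*k ≤ n := by
      have := Finset.mem_range.mp hk
      omega
    have hm : 2*k + (n - 2*k) = n := by omega
    have hti := term_id ((n.choose (2*k) : ℝ) * ((2*k).choose k : ℝ)) k (n - 2*k) (by omega) t
    rw [hm] at hti
    rw [hti]
    have hcast : ((n - 2*k : ℕ) : ℝ) * ((n.choose (2*k) : ℝ)) = (n : ℝ) * (((n-1).choose (2*k) : ℝ)) := by
      rw [← Nat.cast_mul, ← Nat.cast_mul, nat_id]
    have hexp : n - 2*k - 1 = n - 1 - 2*k := by omega
    rw [hexp]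
    linear_combination (-(((2*k).choose k : ℝ) * ((1-t)/2)^(2*k) * t^(n-1-2*k))) * hcast
  rw [Finset.sum_congr rfl hstep, Finset.sum_sub_distrib, ← Finset.mul_sum, ← Finset.mul_sum]
  have hB : ∑ k ∈ Finset.range (n / 2 + 1),
      (((n-1).choose (2*k) : ℝ) * ((2*k).choose k : ℝ) * ((1-t)/2)^(2*k) * t^(n-1-2*k))
      = f (n-1) t := by
    rw [f]
    symm
    apply Finset.sum_subset
    · intro x hx
      simp only [Finset.mem_range] at hx ⊢
      omega
    · intro x _ hnx
      simp only [Finset.mem_range] at hnx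
      have hlt : n - 1 < 2*x := by omega
      rw [Nat.choose_eq_zero_of_lt hlt]
      simp
  rw [hB]
  have hA : (∑ k ∈ Finset.range (n / 2 + 1),
      ((n.choose (2*k) : ℝ) * ((2*k).choose k : ℝ) * ((1-t)/2)^(2*k) * t^(n-2*k))) = f n t := rfl
  rw [hA]
  ring

theorem stmt_17 (n : ℕ) (hn : 2 ≤ n) (t : ℝ) :
    f n t - t = (t - 1) * ∑ k ∈ Finset.Icc 2 n, (1 / (k : ℝ)) * deriv (f k) t := by
  induction n, hn using Nat.le_induction with
  | base =>
    have h1 : f 1 t = t := by simp [f]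
    have hk := key 2 (by norm_num) t
    rw [show (2:ℕ) - 1 = 1 from rfl, h1] at hk
    rw [Finset.Icc_self, Finset.sum_singleton]
    push_cast at hk ⊢
    linear_combination -hk / 2
  | succ m hm ih =>
    have hk := key (m+1) (by omega) t
    simp only [Nat.add_sub_cancel] at hk
    have hne : ((m:ℝ)+1) ≠ 0 := by positivity
    rw [Finset.sum_Icc_succ_top (by omega : 2 ≤ m+1), mul_add, ← ih]
    push_cast at hk ⊢
    field_simp
    linear_combination -hk
end
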